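/- arXiv:2410.08304 — 2 statements merged into one kernel-verified Lean document; each statement's English description precedes it below -/
import Mathlib

section
/- The function V(x₀, x₁) = 10x₀² + 2x₀x₁² + 3x₁⁴ + 6x₁² satisfies V(0) = 0, V(x) > 0 for all x ≠ 0 (via the identity V = 9x₀² + (x₀ + x₁²)² + 2x₁⁴ + 6x₁²), and ∇V(x)·f(x) = -x₁²(116x₁² + 120) ≤ 0 for the system ẋ₀ = 2x₁², ẋ₁ = -10x₁; hence V is a global Lyapunov function for this system. -/
/-!
Completing the square gives `V ≥ 9x₀² + 6x₁² ≥ 6‖x‖²`, which yields positive definiteness and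
radial unboundedness at once. The orbital derivative `∑ᵢ (∇V)ᵢ fᵢ` is the Fréchet derivative of
`V` applied to `f x`, and along `f` it equals `-x₁²(116x₁² + 120)`.
-/

open Filter InnerProductSpace

theorem EuclideanSpace.sum_gradient_mul_eq_fderiv {ι : Type*} [Fintype ι]
    (V : EuclideanSpace ℝ ι → ℝ) (x v : EuclideanSpace ℝ ι) :
    ∑ i, gradient V x i * v i = fderiv ℝ V x v := by
  rw [← toDual_gradient, toDual_apply_apply, PiLp.inner_apply]
  simp only [RCLike.inner_apply, conj_trivial]
  exact Finset.sum_congr rfl fun i _ => mul_comm _ _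

theorem tendsto_comap_norm_atTop_of_mul_sq_norm_le {E : Type*} [Norm E] {V : E → ℝ} {c : ℝ}
    (hc : 0 < c) (hV : ∀ x, c * ‖x‖ ^ 2 ≤ V x) :
    Tendsto V (comap norm atTop) atTop :=
  tendsto_atTop_mono hV <|
    ((tendsto_pow_atTop two_ne_zero).comp tendsto_comap).const_mul_atTop hc

theorem EuclideanSpace.norm_sq_eq_fin_two (x : EuclideanSpace ℝ (Fin 2)) :
    ‖x‖ ^ 2 = x 0 ^ 2 + x 1 ^ 2 := by
  simp [EuclideanSpace.real_norm_sq_eq, Fin.sum_univ_two]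

theorem six_mul_sq_add_sq_le (a b : ℝ) :
    6 * (a ^ 2 + b ^ 2) ≤ 10 * a ^ 2 + 2 * a * b ^ 2 + 3 * b ^ 4 + 6 * b ^ 2 := by
  nlinarith [sq_nonneg (a + b ^ 2), sq_nonneg a, sq_nonneg (b ^ 2)]

theorem hasFDerivAt_lyapunov (x : EuclideanSpace ℝ (Fin 2)) :
    HasFDerivAt (fun y : EuclideanSpace ℝ (Fin 2) =>
        10 * y 0 ^ 2 + 2 * y 0 * y 1 ^ 2 + 3 * y 1 ^ 4 + 6 * y 1 ^ 2)
      ((20 * x 0 + 2 * x 1 ^ 2) • EuclideanSpace.proj (𝕜 := ℝ) 0 +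
        (4 * x 0 * x 1 + 12 * x 1 ^ 3 + 12 * x 1) • EuclideanSpace.proj (𝕜 := ℝ) 1) x := by
  have h₀ := (EuclideanSpace.proj (𝕜 := ℝ) (0 : Fin 2)).hasFDerivAt (x := x)
  have h₁ := (EuclideanSpace.proj (𝕜 := ℝ) (1 : Fin 2)).hasFDerivAt (x := x)
  refine (((((h₀.pow 2).const_mul 10).add ((h₀.const_mul 2).mul (h₁.pow 2))).add
    ((h₁.pow 4).const_mul 3)).add ((h₁.pow 2).const_mul 6)).congr_fderiv ?_
  ext v
  simp only [Fin.isValue, PiLp.proj_apply, Nat.add_one_sub_one, pow_one, nsmul_eq_mul,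
    Nat.cast_ofNat, add_apply, smul_apply, smul_eq_mul]
  ring

/-- `V = 10x₀² + 2x₀x₁² + 3x₁⁴ + 6x₁²` is a global Lyapunov function for the
system `ẋ₀ = 2x₁², ẋ₁ = -10x₁`. -/
theorem lyapunov_nondiagonal_example
    (V : EuclideanSpace ℝ (Fin 2) → ℝ)
    (hV : ∀ x, V x = 10 * (x 0) ^ 2 + 2 * (x 0) * (x 1) ^ 2
      + 3 * (x 1) ^ 4 + 6 * (x 1) ^ 2)
    (f : EuclideanSpace ℝ (Fin 2) → EuclideanSpace ℝ (Fin 2))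
    (hf : ∀ x, f x 0 = 2 * (x 1) ^ 2 ∧ f x 1 = -10 * (x 1)) :
    V 0 = 0 ∧
    (∀ x, V x = 9 * (x 0) ^ 2 + (x 0 + (x 1) ^ 2) ^ 2
      + 2 * (x 1) ^ 4 + 6 * (x 1) ^ 2) ∧
    (∀ x, x ≠ 0 → 0 < V x) ∧
    Tendsto V (comap norm atTop) atTop ∧
    ∀ x, (∑ i, gradient V x i * f x i
        = -(x 1) ^ 2 * (116 * (x 1) ^ 2 + 120)) ∧
      ∑ i, gradient V x i * f x i ≤ 0 := by
  have hV_coercive (x : EuclideanSpace ℝ (Fin 2)) : 6 * ‖x‖ ^ 2 ≤ V x := by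
    rw [EuclideanSpace.norm_sq_eq_fin_two, hV]
    exact six_mul_sq_add_sq_le _ _
  have hV_deriv (x : EuclideanSpace ℝ (Fin 2)) :
      ∑ i, gradient V x i * f x i = -(x 1) ^ 2 * (116 * (x 1) ^ 2 + 120) := by
    rw [EuclideanSpace.sum_gradient_mul_eq_fderiv, funext hV, (hasFDerivAt_lyapunov x).fderiv]
    simp only [add_apply, smul_apply, PiLp.proj_apply, (hf x).1, (hf x).2, smul_eq_mul]
    ring
  refine ⟨by simp [hV], fun x => by rw [hV]; ring, fun x hx => ?_,
    tendsto_comap_norm_atTop_of_mul_sq_norm_le (by norm_num) hV_coercive,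
    fun x => ⟨hV_deriv x, ?_⟩⟩
  · exact (by positivity : 0 < 6 * ‖x‖ ^ 2).trans_le (hV_coercive x)
  · rw [hV_deriv]
    nlinarith [sq_nonneg (x 1)]
end

section
/- The function V(x₀, x₁) = x₀⁴ + 9x₀² + 3x₁² satisfies V(0) = 0, V(x) > 0 for x ≠ 0, and ∇V(x)·f(x) ≤ 0 for all (x₀, x₁) ∈ ℝ², where f(x₀, x₁) = (-x₀⁵ - 4x₀³ - 9x₀x₁⁴ + 3x₀x₁³, -3x₀⁴x₁² - 10x₀³x₁ + 3x₀x₁² - 7x₁³). -/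
/-!
`V` is a sum of functions of single coordinates, so `∇V(x) = (4x₀³ + 18x₀, 6x₁)` is read off
coordinatewise, and `V(x) ≥ 3‖x‖²`. With `a = x₀`, `b = x₁`, the mixed monomials of `-∇V·f` are
absorbed by squares: `60a³b²` by `30(a³ + b²)²`, `6a⁴b³` by `¼(12a²b² + a²b)²` (whose surplus
`a⁴b²` is cancelled by `⅛(a³ - ab²)²`), `-54a²b³` and `-18ab³` by `9(ab - 3ab²)²` and
`9(b² - ab)²`, and the `a²b²` these create by `3/2 (6a² - b²)²`.
-/

theorem hasGradientAt_sum_comp_apply {ι : Type*} [Fintype ι] {φ : ι → ℝ → ℝ} {φ' : ι → ℝ}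
    {x : EuclideanSpace ℝ ι} (h : ∀ i, HasDerivAt (φ i) (φ' i) (x i)) :
    HasGradientAt (fun y : EuclideanSpace ℝ ι => ∑ i, φ i (y i)) (WithLp.toLp 2 φ') x := by
  rw [hasGradientAt_iff_hasFDerivAt]
  have hsum := HasFDerivAt.fun_sum (u := Finset.univ) fun i _ =>
    (h i).comp_hasFDerivAt x (EuclideanSpace.proj (𝕜 := ℝ) i).hasFDerivAt
  refine hsum.congr_fderiv (ContinuousLinearMap.ext fun v => ?_)
  simp [PiLp.inner_apply, mul_comm]

theorem neg_lieDerivative_eq_sum_sq (a b : ℝ) :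
    -((4 * a ^ 3 + 18 * a) * (-a ^ 5 - 4 * a ^ 3 - 9 * a * b ^ 4 + 3 * a * b ^ 3)
      + 6 * b * (-3 * a ^ 4 * b ^ 2 - 10 * a ^ 3 * b + 3 * a * b ^ 2 - 7 * b ^ 3)) =
    4 * a ^ 8 + 31 / 8 * a ^ 6 + 18 * a ^ 4 + 647 / 8 * a ^ 2 * b ^ 4 + 3 / 2 * b ^ 4
      + 1 / 4 * (12 * a ^ 2 * b ^ 2 + a ^ 2 * b) ^ 2 + 1 / 8 * (a ^ 3 - a * b ^ 2) ^ 2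
      + 30 * (a ^ 3 + b ^ 2) ^ 2 + 9 * (a * b - 3 * a * b ^ 2) ^ 2 + 9 * (b ^ 2 - a * b) ^ 2
      + 3 / 2 * (6 * a ^ 2 - b ^ 2) ^ 2 := by
  ring

theorem lieDerivative_nonpos (a b : ℝ) :
    (4 * a ^ 3 + 18 * a) * (-a ^ 5 - 4 * a ^ 3 - 9 * a * b ^ 4 + 3 * a * b ^ 3)
      + 6 * b * (-3 * a ^ 4 * b ^ 2 - 10 * a ^ 3 * b + 3 * a * b ^ 2 - 7 * b ^ 3) ≤ 0 := by
  rw [← neg_nonneg, neg_lieDerivative_eq_sum_sq]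
  positivity

/-- Lyapunov verification for
`ẋ₀ = -x₀⁵-4x₀³-9x₀x₁⁴+3x₀x₁³, ẋ₁ = -3x₀⁴x₁²-10x₀³x₁+3x₀x₁²-7x₁³`
with `V = x₀⁴+9x₀²+3x₁²`. -/
theorem lyapunov_example_quartic
    (V : EuclideanSpace ℝ (Fin 2) → ℝ)
    (hV : ∀ x, V x = (x 0) ^ 4 + 9 * (x 0) ^ 2 + 3 * (x 1) ^ 2)
    (f : EuclideanSpace ℝ (Fin 2) → EuclideanSpace ℝ (Fin 2))
    (hf : ∀ x, f x 0 = -(x 0) ^ 5 - 4 * (x 0) ^ 3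
        - 9 * (x 0) * (x 1) ^ 4 + 3 * (x 0) * (x 1) ^ 3
      ∧ f x 1 = -3 * (x 0) ^ 4 * (x 1) ^ 2 - 10 * (x 0) ^ 3 * (x 1)
        + 3 * (x 0) * (x 1) ^ 2 - 7 * (x 1) ^ 3) :
    V 0 = 0 ∧ (∀ x, x ≠ 0 → 0 < V x) ∧
    ∀ x, ∑ i, gradient V x i * f x i ≤ 0 := by
  refine ⟨by simp [hV], fun x hx => ?_, fun x => ?_⟩
  · have hnorm : ‖x‖ ^ 2 = x 0 ^ 2 + x 1 ^ 2 := by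
      rw [EuclideanSpace.real_norm_sq_eq, Fin.sum_univ_two]
    have hpos : 0 < ‖x‖ ^ 2 := by positivity
    rw [hV]
    nlinarith [sq_nonneg (x 0 ^ 2), sq_nonneg (x 0)]
  · have hVsum : V = fun y => ∑ i, ![fun t => t ^ 4 + 9 * t ^ 2, fun t => 3 * t ^ 2] i (y i) := by
      funext y
      simp [hV, Fin.sum_univ_two, add_assoc]
    have hgrad : gradient V x = WithLp.toLp 2 ![4 * x 0 ^ 3 + 18 * x 0, 6 * x 1] := by
      rw [hVsum]
      refine (hasGradientAt_sum_comp_apply fun i => ?_).gradient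
      fin_cases i
      · simpa using (((hasDerivAt_pow 4 (x 0)).fun_add
          ((hasDerivAt_pow 2 (x 0)).const_mul 9)).congr_deriv (by ring))
      · simpa using (((hasDerivAt_pow 2 (x 1)).const_mul 3).congr_deriv (by ring))
    rw [hgrad, Fin.sum_univ_two, (hf x).1, (hf x).2]
    exact lieDerivative_nonpos (x 0) (x 1)
end
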